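/- Every even lattice of rank 3 and signature (1,2) with discriminant number 2 is isometric to U ⊕ A₁: for every symmetric 3×3 integer matrix M with even diagonal entries, signature (1,2) and |det M| = 2, there exists P ∈ GL₃(ℤ) with PᵀMP equal to the block-diagonal matrix with blocks [[0,1],[1,0]] and (−2). -/

import Mathlib

open Matrix

lemma round_pos (b s : ℤ) (hb : 0 < b) : ∃ k : ℤ, 2 * |b * k + s| ≤ b := by
  have hr0 : 0 ≤ s % b := Int.emod_nonneg s (by positivity)
  have hr1 : s % b < b := Int.emod_lt_of_pos s hb
  have hdef : s % b = s - b * (s / b) := Int.emod_def s b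
  by_cases h2 : 2 * (s % b) ≤ b
  · refine ⟨-(s / b), ?_⟩
    rw [show b * -(s/b) + s = s % b by linear_combination -hdef, abs_of_nonneg hr0]
    omega
  · refine ⟨-(s / b) - 1, ?_⟩
    rw [show b * (-(s/b) - 1) + s = s % b - b by linear_combination -hdef,
      abs_of_nonpos (by omega)]
    omega

/-- Rounding: for a ≠ 0 we can shift s by a multiple of a into [-|a|/2, |a|/2]. -/
lemma round_lemma (a s : ℤ) (ha : a ≠ 0) : ∃ k : ℤ, 2 * |a * k + s| ≤ |a| := by
  rcases lt_or_gt_of_ne ha with hneg | hpos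
  · obtain ⟨k, hk⟩ := round_pos (-a) s (by linarith)
    refine ⟨-k, ?_⟩
    rw [abs_of_neg hneg]
    rwa [show a * -k + s = -a * k + s by ring]
  · obtain ⟨k, hk⟩ := round_pos a s hpos
    rw [abs_of_pos hpos]
    exact ⟨k, hk⟩

/-- Binary reduction: any integral binary quadratic form has a nonzero vector whose
value v satisfies 3 v² ≤ 4 |det|. -/
lemma binary_descent : ∀ n : ℕ, ∀ α β γ : ℤ, α.natAbs ≤ n →
    ∃ y z : ℤ, ¬(y = 0 ∧ z = 0) ∧
      3 * (α * y^2 + 2*β*y*z + γ*z^2)^2 ≤ 4 * |α*γ - β^2| := by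
  intro n
  induction n with
  | zero =>
    intro α β γ hn
    have hα : α = 0 := by omega
    exact ⟨1, 0, by simp, by simp [hα]; positivity⟩
  | succ n ih =>
    intro α β γ hn
    by_cases hα : α = 0
    · exact ⟨1, 0, by simp, by simp [hα]; positivity⟩
    obtain ⟨k, hk⟩ := round_lemma α β hα
    set β' := β + α * k with hβ'
    set γ' := α * k^2 + 2*β*k + γ with hγ'
    have hdet' : α * γ' - β'^2 = α * γ - β^2 := by rw [hβ', hγ']; ring
    have hk' : 2 * |β'| ≤ |α| := by rwa [show β' = α * k + β by rw [hβ']; ring]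
    by_cases hlt : γ'.natAbs < α.natAbs
    · obtain ⟨y, z, hyz, hb⟩ := ih γ' β' α (by omega)
      refine ⟨z + k * y, y, ?_, ?_⟩
      · rintro ⟨h1, h2⟩
        have hky : k * y = 0 := by rw [h2]; ring
        exact hyz ⟨h2, by omega⟩
      · have hval : α * (z + k*y)^2 + 2*β*(z + k*y)*y + γ*y^2
            = γ' * y^2 + 2*β'*y*z + α*z^2 := by rw [hβ', hγ']; ring
        have hd : |γ' * α - β'^2| = |α * γ - β^2| := by
          rw [show γ' * α - β'^2 = α * γ' - β'^2 by ring, hdet']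
        calc 3 * (α * (z + k*y)^2 + 2*β*(z+k*y)*y + γ*y^2)^2
            = 3 * (γ' * y^2 + 2*β'*y*z + α*z^2)^2 := by rw [hval]
          _ ≤ 4 * |γ' * α - β'^2| := hb
          _ = 4 * |α*γ - β^2| := by rw [hd]
    · -- terminal case: (1,0) works
      refine ⟨1, 0, by simp, ?_⟩
      have h1 : |α| ≤ |γ'| := by
        rw [Int.abs_eq_natAbs, Int.abs_eq_natAbs]
        exact_mod_cast by omega
      have h2 : 4 * β'^2 ≤ α^2 := by nlinarith [abs_nonneg β', sq_abs β', sq_abs α]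
      have h3 : α^2 ≤ |α| * |γ'| := by
        rw [← abs_mul]
        calc α^2 = |α| * |α| := by rw [← abs_mul, abs_mul_self]; ring
          _ ≤ |α * γ'| := by rw [abs_mul]; exact mul_le_mul_of_nonneg_left h1 (abs_nonneg α)
      have h4 : |α| * |γ'| - β'^2 ≤ |α * γ' - β'^2| := by
        calc |α| * |γ'| - β'^2 = |α * γ'| - |β'^2| := by rw [abs_mul, abs_of_nonneg (sq_nonneg β')]
          _ ≤ |α * γ' - β'^2| := abs_sub_abs_le_abs_sub _ _
      have h5 : 3 * α^2 ≤ 4 * |α * γ' - β'^2| := by nlinarith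
      rw [hdet'] at h5
      calc 3 * (α * 1^2 + 2*β*1*0 + γ*0^2)^2 = 3 * α^2 := by ring_nf
        _ ≤ 4 * |α*γ - β^2| := h5

/-- The quadratic form value of an integral matrix. -/
def Qv (M : Matrix (Fin 3) (Fin 3) ℤ) (v : Fin 3 → ℤ) : ℤ := v ⬝ᵥ M.mulVec v

lemma fin3_eta (N : Matrix (Fin 3) (Fin 3) ℤ) :
    N = !![N 0 0, N 0 1, N 0 2; N 1 0, N 1 1, N 1 2; N 2 0, N 2 1, N 2 2] := by
  ext i j; fin_cases i <;> fin_cases j <;> rfl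

lemma vec3_eta (v : Fin 3 → ℤ) : v = ![v 0, v 1, v 2] := by
  ext i; fin_cases i <;> rfl

lemma Qv_explicit (a b c b' c' e' d e f x y z : ℤ) :
    Qv !![a,b,c;b',d,e;c',e',f] ![x,y,z]
      = a*x^2 + d*y^2 + f*z^2 + (b+b')*x*y + (c+c')*x*z + (e+e')*y*z := by
  simp [Qv, mulVec, dotProduct, Fin.sum_univ_three]
  ring

lemma Qv_conj (M P : Matrix (Fin 3) (Fin 3) ℤ) (v : Fin 3 → ℤ) :
    Qv (Pᵀ * M * P) v = Qv M (P *ᵥ v) := by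
  unfold Qv
  rw [← Matrix.mulVec_mulVec, ← Matrix.mulVec_mulVec, Matrix.dotProduct_mulVec,
    Matrix.vecMul_transpose]

lemma IsSymm.e (hs : (M : Matrix (Fin 3) (Fin 3) ℤ).IsSymm) (i j : Fin 3) : M j i = M i j := by
  conv_lhs => rw [← hs]
  rfl

lemma Qv_even (M : Matrix (Fin 3) (Fin 3) ℤ) (hsymm : M.IsSymm)
    (heven : ∀ i, 2 ∣ M i i) (v : Fin 3 → ℤ) : 2 ∣ Qv M v := by
  obtain ⟨a0, h0⟩ := heven 0
  obtain ⟨a1, h1⟩ := heven 1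
  obtain ⟨a2, h2⟩ := heven 2
  have h := Qv_explicit (M 0 0) (M 0 1) (M 0 2) (M 1 0) (M 2 0) (M 2 1) (M 1 1) (M 1 2)
    (M 2 2) (v 0) (v 1) (v 2)
  rw [← fin3_eta, ← vec3_eta] at h
  rw [h, IsSymm.e hsymm 0 1, IsSymm.e hsymm 0 2, IsSymm.e hsymm 1 2, h0, h1, h2]
  exact ⟨a0 * (v 0)^2 + a1 * (v 1)^2 + a2 * (v 2)^2 + M 0 1 * (v 0) * (v 1)
    + M 0 2 * (v 0) * (v 2) + M 1 2 * (v 1) * (v 2), by ring⟩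

lemma Qv_smul (M : Matrix (Fin 3) (Fin 3) ℤ) (g : ℤ) (w : Fin 3 → ℤ) :
    Qv M (g • w) = g^2 * Qv M w := by
  unfold Qv
  rw [Matrix.mulVec_smul, dotProduct_smul, smul_dotProduct]
  push_cast [smul_eq_mul]
  ring

lemma Qv_e0 (N : Matrix (Fin 3) (Fin 3) ℤ) : Qv N ![1,0,0] = N 0 0 := by
  simp [Qv, mulVec, dotProduct, Fin.sum_univ_three]

lemma diag_even_conj (M P : Matrix (Fin 3) (Fin 3) ℤ) (hsymm : M.IsSymm)
    (heven : ∀ i, 2 ∣ M i i) : ∀ i, 2 ∣ (Pᵀ * M * P) i i := by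
  intro i
  have h1 : (Pᵀ * M * P) i i = Qv (Pᵀ * M * P) (fun j => if j = i then 1 else 0) := by
    fin_cases i <;>
      simp [Qv, mulVec, dotProduct, Fin.sum_univ_three]
  rw [h1, Qv_conj]
  exact Qv_even M hsymm heven _

lemma symm_conj (M P : Matrix (Fin 3) (Fin 3) ℤ) (hsymm : M.IsSymm) :
    (Pᵀ * M * P).IsSymm := by
  unfold Matrix.IsSymm
  rw [Matrix.transpose_mul, Matrix.transpose_mul, Matrix.transpose_transpose,
    hsymm.eq, Matrix.mul_assoc]

lemma det_conj (M P : Matrix (Fin 3) (Fin 3) ℤ) (hP : P.det = 1) :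
    (Pᵀ * M * P).det = M.det := by
  rw [Matrix.det_mul, Matrix.det_mul, Matrix.det_transpose, hP]
  ring

lemma mulVec_ne_zero (P : Matrix (Fin 3) (Fin 3) ℤ) (hP : IsUnit P.det)
    (v : Fin 3 → ℤ) (hv : v ≠ 0) : P *ᵥ v ≠ 0 := by
  intro h
  apply hv
  have := P.invertibleOfIsUnitDet hP
  calc v = (⅟P * P) *ᵥ v := by rw [invOf_mul_self]; simp
    _ = ⅟P *ᵥ (P *ᵥ v) := by rw [Matrix.mulVec_mulVec]
    _ = 0 := by rw [h]; simp

/-- Every nonzero integer 3-vector is a positive multiple of a primitive vector. -/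
lemma exists_primitive (v : Fin 3 → ℤ) (hv : v ≠ 0) :
    ∃ (g : ℤ) (w : Fin 3 → ℤ), 0 < g ∧ v = g • w ∧
      Int.gcd (w 0) (Int.gcd (w 1) (w 2)) = 1 := by
  set G : ℕ := Int.gcd (v 0) (Int.gcd (v 1) (v 2)) with hG
  have hG0 : G ≠ 0 := by
    intro h
    apply hv
    rw [hG, Int.gcd_eq_zero_iff] at h
    obtain ⟨h0, h12⟩ := h
    have h12' : Int.gcd (v 1) (v 2) = 0 := by exact_mod_cast h12
    rw [Int.gcd_eq_zero_iff] at h12'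
    funext i; fin_cases i <;> simp [h0, h12'.1, h12'.2]
  have hd0 : (G:ℤ) ∣ v 0 := Int.gcd_dvd_left _ _
  have hd1 : (G:ℤ) ∣ v 1 := dvd_trans (Int.natCast_dvd_natCast.mpr (Nat.gcd_dvd_right _ _)) (Int.gcd_dvd_left _ _)
  have hd2 : (G:ℤ) ∣ v 2 := dvd_trans (Int.natCast_dvd_natCast.mpr (Nat.gcd_dvd_right _ _)) (Int.gcd_dvd_right _ _)
  obtain ⟨w0, hw0⟩ := hd0
  obtain ⟨w1, hw1⟩ := hd1
  obtain ⟨w2, hw2⟩ := hd2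
  refine ⟨(G:ℤ), ![w0, w1, w2], by exact_mod_cast Nat.pos_of_ne_zero hG0, ?_, ?_⟩
  · funext i; fin_cases i <;> simp [hw0, hw1, hw2]
  · have h1 : Int.gcd (v 1) (v 2) = G * Int.gcd w1 w2 := by
      rw [hw1, hw2, Int.gcd_mul_left, Int.natAbs_natCast]
    have key : G = G * Int.gcd w0 (Int.gcd w1 w2) := by
      conv_lhs => rw [hG, hw0, h1]
      rw [Nat.cast_mul, Int.gcd_mul_left, Int.natAbs_natCast]
    have ht : G * Int.gcd w0 (Int.gcd w1 w2) = G * 1 := by omega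
    have := Nat.eq_of_mul_eq_mul_left (Nat.pos_of_ne_zero hG0) ht
    simpa using this

/-- A primitive integer 3-vector is the first column of a matrix of determinant 1. -/
lemma extend_basis (w : Fin 3 → ℤ) (hw : Int.gcd (w 0) (Int.gcd (w 1) (w 2)) = 1) :
    ∃ P : Matrix (Fin 3) (Fin 3) ℤ, P.det = 1 ∧ P 0 0 = w 0 ∧ P 1 0 = w 1 ∧ P 2 0 = w 2 := by
  set a := w 0; set b := w 1; set c := w 2
  set g : ℕ := Int.gcd b c with hg
  by_cases hg0 : g = 0
  · -- b = c = 0, a = ±1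
    have hbc := Int.gcd_eq_zero_iff.mp (hg ▸ hg0)
    obtain ⟨hb, hc⟩ := hbc
    have ha : a.natAbs = 1 := by
      rw [hg0] at hw
      simpa [Int.gcd] using hw
    have ha2 : a * a = 1 := by
      rcases Int.natAbs_eq_iff.mp ha with h | h <;> rw [h] <;> ring
    refine ⟨!![a,0,0;0,a,0;0,0,1], ?_, ?_, ?_, ?_⟩
    · rw [Matrix.det_fin_three]
      norm_num [ha2, Matrix.cons_val_two, Matrix.cons_val_one, Matrix.head_cons, Matrix.tail_cons]
    · rfl
    · rw [hb]; rfl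
    · rw [hc]; rfl
  · -- g > 0
    have hdb : (g:ℤ) ∣ b := Int.gcd_dvd_left _ _
    have hdc : (g:ℤ) ∣ c := Int.gcd_dvd_right _ _
    obtain ⟨b₁, hb₁⟩ := hdb
    obtain ⟨c₁, hc₁⟩ := hdc
    have hbez1 : (g:ℤ) = b * Int.gcdA b c + c * Int.gcdB b c := Int.gcd_eq_gcd_ab b c
    set s := Int.gcdA b c
    set t := Int.gcdB b c
    have hst : b₁ * s + c₁ * t = 1 := by
      have h5 : (g:ℤ) * (b₁ * s + c₁ * t) = (g:ℤ) * 1 := by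
        rw [mul_one]
        conv_lhs => rw [mul_add, ← mul_assoc, ← mul_assoc, ← hb₁, ← hc₁]
        linarith [hbez1]
      exact mul_left_cancel₀ (by exact_mod_cast hg0) h5
    have hbez2 : (1:ℤ) = a * Int.gcdA a g + g * Int.gcdB a g := by
      have h1 : Int.gcd a (g:ℤ) = 1 := hw
      have h2 := Int.gcd_eq_gcd_ab a (g:ℤ)
      rw [h1] at h2
      exact_mod_cast h2
    set u := Int.gcdA a (g:ℤ)
    set r := Int.gcdB a (g:ℤ)
    refine ⟨!![a, -r, 0; b, u*b₁, -t; c, u*c₁, s], ?_, ?_, ?_, ?_⟩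
    · rw [Matrix.det_fin_three]
      norm_num [Matrix.cons_val_two, Matrix.cons_val_one, Matrix.head_cons, Matrix.tail_cons]
      rw [hb₁, hc₁]
      linear_combination (a*u + (g:ℤ)*r) * hst - hbez2
    · rfl
    · rfl
    · rfl
lemma descent_arith (m S T : ℤ) (hm : 2 ≤ m) (hS : 2*|S| ≤ m)
    (hchain : m*m ≤ S^2 + |T|) (hbin : 3*T^2 ≤ 4*(m*2)) : False := by
  have hS2 : 4 * S^2 ≤ m*m := by nlinarith [abs_nonneg S, sq_abs S]
  have hTlb : 3 * (m*m) ≤ 4 * |T| := by linarith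
  have hTT : |T| * |T| = T * T := abs_mul_abs_self T
  have h16 : 9 * ((m*m) * (m*m)) ≤ 16 * (|T| * |T|) := by
    nlinarith [hTlb, abs_nonneg T]
  have h27 : 27 * ((m*m) * (m*m)) ≤ 128 * m := by nlinarith [h16, hTT]
  have h216 : 216 * m ≤ 27 * ((m*m) * (m*m)) := by
    have h8 : 8 ≤ m * m * m := by nlinarith [hm]
    have := mul_le_mul_of_nonneg_left h8 (by linarith : (0:ℤ) ≤ 27 * m)
    nlinarith [this]
  linarith

set_option maxHeartbeats 1600000 in
/-- Hermite-type bound: an even ternary lattice with |det| = 2 is isotropic. -/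
theorem exists_isotropic (M : Matrix (Fin 3) (Fin 3) ℤ) (hsymm : M.IsSymm)
    (heven : ∀ i, 2 ∣ M i i) (hdet : |M.det| = 2) :
    ∃ v : Fin 3 → ℤ, v ≠ 0 ∧ Qv M v = 0 := by
  by_contra hcon
  push_neg at hcon
  classical
  have hex : ∃ n : ℕ, ∃ v : Fin 3 → ℤ, v ≠ 0 ∧ (Qv M v).natAbs = n :=
    ⟨_, ![1,0,0], by intro h; have := congrFun h 0; simp at this, rfl⟩
  set m : ℕ := Nat.find hex with hm
  obtain ⟨x, hx0, hxm⟩ := Nat.find_spec hex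
  have hmin : ∀ v : Fin 3 → ℤ, v ≠ 0 → m ≤ (Qv M v).natAbs :=
    fun v hv => Nat.find_min' hex ⟨v, hv, rfl⟩
  clear_value m
  have hxm' : (Qv M x).natAbs = m := by rw [hm]; exact hxm
  have hm0 : 0 < m := by
    rcases Nat.eq_zero_or_pos m with h | h
    · exact absurd (Int.natAbs_eq_zero.mp (by rw [hxm', h])) (hcon x hx0)
    · exact h
  have hm2 : 2 ∣ m := by
    have h2 : ((2:ℤ)).natAbs ∣ (Qv M x).natAbs :=
      Int.natAbs_dvd_natAbs.mpr (Qv_even M hsymm heven x)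
    simpa [hxm'] using h2
  have hmn : 2 ≤ m := by omega
  have hmz2 : (2:ℤ) ≤ (m:ℤ) := by exact_mod_cast hmn
  -- replace x by a primitive vector of the same minimal value
  obtain ⟨g, w, hgpos, hgw, hprim⟩ := exists_primitive x hx0
  have hw0 : w ≠ 0 := by
    rintro rfl
    exact hx0 (by rw [hgw]; funext i; simp)
  have hQw : (Qv M w).natAbs = m := by
    have hsm : Qv M x = g^2 * Qv M w := by rw [hgw, Qv_smul]
    have hA : m = (g^2).natAbs * (Qv M w).natAbs := by
      rw [← hxm', hsm, Int.natAbs_mul]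
    have hA1 : 1 ≤ (g^2).natAbs := by
      have : g^2 ≠ 0 := pow_ne_zero 2 (by omega)
      omega
    have hq := hmin w hw0
    have := Nat.mul_le_mul_right ((Qv M w).natAbs) hA1
    omega
  -- change basis so that the minimal vector is e₀
  obtain ⟨P₀, hP₀det, h00, h10, h20⟩ := extend_basis w hprim
  set N := P₀ᵀ * M * P₀ with hN
  have hsymm' : N.IsSymm := symm_conj M P₀ hsymm
  have hdet' : |N.det| = 2 := by rw [hN, det_conj M P₀ hP₀det]; exact hdet
  have hP₀unit : IsUnit P₀.det := by rw [hP₀det]; exact isUnit_one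
  have hcol : P₀ *ᵥ ![1,0,0] = w := by
    funext i
    fin_cases i <;>
      simp [Matrix.mulVec, dotProduct, Fin.sum_univ_three, h00, h10, h20]
  have hQ0 : Qv N ![1,0,0] = Qv M w := by rw [hN, Qv_conj, hcol]
  have haN : (N 0 0).natAbs = m := by rw [← Qv_e0 N, hQ0, hQw]
  have hmin' : ∀ v : Fin 3 → ℤ, v ≠ 0 → (m:ℤ) ≤ |Qv N v| := by
    intro v hv
    rw [hN, Qv_conj, Int.abs_eq_natAbs]
    exact_mod_cast hmin _ (mulVec_ne_zero P₀ hP₀unit v hv)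
  have hani : ∀ v : Fin 3 → ℤ, v ≠ 0 → Qv N v ≠ 0 := by
    intro v hv
    rw [hN, Qv_conj]
    exact hcon _ (mulVec_ne_zero P₀ hP₀unit v hv)
  -- scalarize
  set a := N 0 0 with hadef
  set b := N 0 1 with hbdef
  set c := N 0 2 with hcdef
  set d := N 1 1 with hddef
  set e := N 1 2 with hedef
  set f := N 2 2 with hfdef
  have hMexp : N = !![a,b,c;b,d,e;c,e,f] := by
    conv_lhs => rw [fin3_eta N]
    rw [IsSymm.e hsymm' 0 1, IsSymm.e hsymm' 0 2, IsSymm.e hsymm' 1 2]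
  have haabs : |a| = (m:ℤ) := by rw [Int.abs_eq_natAbs, haN]
  have ha0 : a ≠ 0 := by
    intro h
    rw [h] at haabs
    simp at haabs
    omega
  set α := a*d - b^2 with hα
  set β := a*e - b*c with hβ
  set γ := a*f - c^2 with hγ
  have hdetE : α*γ - β^2 = a * N.det := by
    conv_rhs => rw [hMexp]
    rw [Matrix.det_fin_three]
    norm_num [hα, hβ, hγ, Matrix.cons_val_two, Matrix.cons_val_one, Matrix.head_cons, Matrix.tail_cons]
    ring
  have habs : |α*γ - β^2| = (m:ℤ) * 2 := by
    rw [hdetE, abs_mul, haabs, hdet']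
  obtain ⟨y, z, hyz, hbin⟩ := binary_descent α.natAbs α β γ le_rfl
  rw [habs] at hbin
  set T := α*y^2 + 2*β*y*z + γ*z^2 with hT
  obtain ⟨k, hk⟩ := round_lemma a (b*y + c*z) ha0
  rw [haabs] at hk
  set v : Fin 3 → ℤ := ![k, y, z] with hv
  have hv0 : v ≠ 0 := by
    intro h
    exact hyz ⟨congrFun h 1, congrFun h 2⟩
  have hident : a * Qv N v = (a*k + (b*y + c*z))^2 + T := by
    rw [hMexp, hv, Qv_explicit, hT, hα, hβ, hγ]
    ring
  set S := a*k + (b*y + c*z) with hS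
  have hQm : (m:ℤ) ≤ |Qv N v| := hmin' v hv0
  set Q : ℤ := Qv N v with hQdef
  clear_value N a b c d e f α β γ T S v Q
  have hchain : (m:ℤ)*(m:ℤ) ≤ S^2 + |T| := by
    calc (m:ℤ)*(m:ℤ) ≤ |a| * |Q| := by
          rw [haabs]; exact mul_le_mul_of_nonneg_left hQm (by positivity)
      _ = |a * Q| := (abs_mul a _).symm
      _ = |S^2 + T| := by rw [hident]
      _ ≤ |S^2| + |T| := abs_add_le _ _
      _ = S^2 + |T| := by rw [abs_of_nonneg (sq_nonneg S)]
  exact descent_arith (m:ℤ) S T hmz2 hk hchain hbin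

lemma det_eq_two (M : Matrix (Fin 3) (Fin 3) ℤ)
    (hH : (M.map (Int.cast : ℤ → ℝ)).IsHermitian)
    (hpos : (Finset.univ.filter fun i => 0 < hH.eigenvalues i).card = 1)
    (hneg : (Finset.univ.filter fun i => hH.eigenvalues i < 0).card = 2)
    (hdet : |M.det| = 2) : M.det = 2 := by
  have hdet0 : M.det ≠ 0 := by intro h; rw [h] at hdet; norm_num at hdet
  have hcast : ((M.det : ℤ) : ℝ) = (M.map (Int.cast : ℤ → ℝ)).det := by
    have := RingHom.map_det (Int.castRingHom ℝ) M
    simpa using this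
  have hprod : (M.map (Int.cast : ℤ → ℝ)).det = ∏ i, hH.eigenvalues i := by
    rw [hH.det_eq_prod_eigenvalues]
    norm_num
  have hne : ∀ i, hH.eigenvalues i ≠ 0 := by
    intro i hi
    apply hdet0
    have : (M.map (Int.cast : ℤ → ℝ)).det = 0 := by
      rw [hprod]
      exact Finset.prod_eq_zero (Finset.mem_univ i) hi
    rw [← hcast] at this
    exact_mod_cast this
  set sp := Finset.univ.filter fun i => 0 < hH.eigenvalues i with hsp
  set sn := Finset.univ.filter fun i => hH.eigenvalues i < 0 with hsn
  have hdisj : Disjoint sp sn := by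
    rw [Finset.disjoint_left]
    intro i hip hin
    rw [hsp, Finset.mem_filter] at hip
    rw [hsn, Finset.mem_filter] at hin
    linarith [hip.2, hin.2]
  have hunion : sp ∪ sn = Finset.univ := by
    ext i
    simp only [hsp, hsn, Finset.mem_union, Finset.mem_filter, Finset.mem_univ, true_and,
      iff_true]
    rcases lt_trichotomy (hH.eigenvalues i) 0 with h | h | h
    · exact Or.inr h
    · exact absurd h (hne i)
    · exact Or.inl h
  have hprodpos : 0 < ∏ i, hH.eigenvalues i := by
    rw [← hunion, Finset.prod_union hdisj]
    have h1 : 0 < ∏ i ∈ sp, hH.eigenvalues i := by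
      apply Finset.prod_pos
      intro i hi
      rw [hsp, Finset.mem_filter] at hi
      exact hi.2
    have h2 : 0 < ∏ i ∈ sn, hH.eigenvalues i := by
      obtain ⟨i, j, hij, hpair⟩ := Finset.card_eq_two.mp hneg
      rw [hpair, Finset.prod_pair hij]
      have hi : hH.eigenvalues i < 0 := by
        have : i ∈ sn := by rw [hpair]; exact Finset.mem_insert_self _ _
        rw [hsn, Finset.mem_filter] at this; exact this.2
      have hj : hH.eigenvalues j < 0 := by
        have : j ∈ sn := by rw [hpair]; simp
        rw [hsn, Finset.mem_filter] at this; exact this.2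
      exact mul_pos_of_neg_of_neg hi hj
    exact mul_pos h1 h2
  have : (0:ℝ) < ((M.det : ℤ) : ℝ) := by rw [hcast, hprod]; exact hprodpos
  have hpos' : 0 < M.det := by exact_mod_cast this
  rcases abs_cases M.det with ⟨h1, _⟩ | ⟨_, h2⟩ <;> omega
lemma trans_lit (a b c d e f g h i : ℤ) :
    (!![a,b,c;d,e,f;g,h,i])ᵀ = !![a,d,g;b,e,h;c,f,i] := by
  ext i j; fin_cases i <;> fin_cases j <;> rfl
/-- Gram matrix of U ⊕ A₁. -/
def targetGram : Matrix (Fin 3) (Fin 3) ℤ :=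
  !![0, 1, 0;
    1, 0, 0;
    0, 0, -2]

set_option maxHeartbeats 2000000 in
/-- Every even lattice of rank 3 and signature (1,2) with the stated discriminant
number is isometric to U ⊕ A₁. -/
theorem statement_5 (M : Matrix (Fin 3) (Fin 3) ℤ)
    (hsymm : M.IsSymm)
    (heven : ∀ i, 2 ∣ M i i)
    (hH : (M.map (Int.cast : ℤ → ℝ)).IsHermitian)
    (hpos : (Finset.univ.filter fun i => 0 < hH.eigenvalues i).card = 1)
    (hneg : (Finset.univ.filter fun i => hH.eigenvalues i < 0).card = 2)
    (hdet : |M.det| = 2) :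
    ∃ P : Matrix (Fin 3) (Fin 3) ℤ, IsUnit P.det ∧ Pᵀ * M * P = targetGram := by
  have hdet2 : M.det = 2 := det_eq_two M hH hpos hneg hdet
  obtain ⟨v, hv0, hvQ⟩ := exists_isotropic M hsymm heven hdet
  obtain ⟨g, w, hgpos, hgw, hprim⟩ := exists_primitive v hv0
  have hw0 : w ≠ 0 := by
    rintro rfl
    exact hv0 (by rw [hgw]; funext i; simp)
  have hQw : Qv M w = 0 := by
    have hsm : Qv M v = g^2 * Qv M w := by rw [hgw, Qv_smul]
    rw [hvQ] at hsm
    have hg2 : g^2 ≠ 0 := pow_ne_zero 2 (by omega)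
    exact (mul_eq_zero.mp hsm.symm).resolve_left hg2
  obtain ⟨P₀, hP₀det, h00, h10, h20⟩ := extend_basis w hprim
  set M₁ := P₀ᵀ * M * P₀ with hM₁
  have hsymm₁ : M₁.IsSymm := symm_conj M P₀ hsymm
  have heven₁ : ∀ i, 2 ∣ M₁ i i := diag_even_conj M P₀ hsymm heven
  have hdet₁ : M₁.det = 2 := by rw [hM₁, det_conj M P₀ hP₀det]; exact hdet2
  have hcol : P₀ *ᵥ ![1,0,0] = w := by
    funext i
    fin_cases i <;> simp [Matrix.mulVec, dotProduct, Fin.sum_univ_three, h00, h10, h20]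
  have hM100 : M₁ 0 0 = 0 := by
    rw [← Qv_e0 M₁, hM₁, Qv_conj, hcol]; exact hQw
  -- scalarize M₁
  set p := M₁ 0 1 with hp
  set q := M₁ 0 2 with hq
  set d := M₁ 1 1 with hd
  set e := M₁ 1 2 with he
  set f := M₁ 2 2 with hf
  have hM1exp : M₁ = !![0,p,q;p,d,e;q,e,f] := by
    conv_lhs => rw [fin3_eta M₁]
    rw [IsSymm.e hsymm₁ 0 1, IsSymm.e hsymm₁ 0 2, IsSymm.e hsymm₁ 1 2, hM100]
  have hdf : -(f*p^2) + 2*(e*p*q) - d*q^2 = 2 := by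
    have hdet' := hdet₁
    rw [hM1exp, Matrix.det_fin_three] at hdet'
    norm_num [Matrix.cons_val_two, Matrix.cons_val_one, Matrix.head_cons, Matrix.tail_cons] at hdet'
    linarith [hdet']
  -- gcd (p, q) = 1
  set G : ℕ := Int.gcd p q with hG
  have hG0 : G ≠ 0 := by
    intro h
    rw [hG, Int.gcd_eq_zero_iff] at h
    rw [h.1, h.2] at hdf
    norm_num at hdf
  obtain ⟨p', hp'⟩ : ((G:ℤ)) ∣ p := Int.gcd_dvd_left _ _
  obtain ⟨q', hq'⟩ : ((G:ℤ)) ∣ q := Int.gcd_dvd_right _ _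
  have hGdvd : ((G:ℤ))^2 * (-(f*p'^2) + 2*(e*p'*q') - d*q'^2) = 2 := by
    have hdf' := hdf
    rw [hp', hq'] at hdf'
    linear_combination hdf'
  have hG1 : G = 1 := by
    have h1 : ((G:ℤ))^2 ∣ 2 := ⟨_, hGdvd.symm⟩
    have h2 : ((G^2:ℕ):ℤ) ∣ ((2:ℕ):ℤ) := by push_cast; exact h1
    have h3 : (G^2 : ℕ) ∣ 2 := Int.natCast_dvd_natCast.mp h2
    have h4 := Nat.le_of_dvd (by norm_num) h3
    rcases Nat.lt_or_ge G 2 with h | h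
    · omega
    · nlinarith
  have hbez : (1:ℤ) = p * Int.gcdA p q + q * Int.gcdB p q := by
    have hb := Int.gcd_eq_gcd_ab p q
    rw [← hG, hG1] at hb
    exact_mod_cast hb
  set σ := Int.gcdA p q with hσ
  set τ := Int.gcdB p q with hτ
  have hδ1 : Int.gcd σ τ = 1 := by
    have hδ : ((Int.gcd σ τ : ℕ) : ℤ) ∣ 1 := by
      rw [hbez]
      exact dvd_add (Dvd.dvd.mul_left (Int.gcd_dvd_left _ _) p) (Dvd.dvd.mul_left (Int.gcd_dvd_right _ _) q)
    exact Nat.dvd_one.mp (Int.natCast_dvd_natCast.mp (by exact_mod_cast hδ))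
  have hbez2 : (1:ℤ) = σ * Int.gcdA σ τ + τ * Int.gcdB σ τ := by
    have hb := Int.gcd_eq_gcd_ab σ τ
    rw [hδ1] at hb
    exact_mod_cast hb
  set μ := Int.gcdA σ τ with hμ
  set ν := Int.gcdB σ τ with hν
  set P₂ : Matrix (Fin 3) (Fin 3) ℤ := !![1,0,0; 0,σ,-ν; 0,τ,μ] with hP₂
  have hP₂det : P₂.det = 1 := by
    rw [hP₂, Matrix.det_fin_three]
    norm_num [Matrix.cons_val_two, Matrix.cons_val_one, Matrix.head_cons, Matrix.tail_cons]
    linear_combination -hbez2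
  set M₂ := P₂ᵀ * M₁ * P₂ with hM₂
  have hsymm₂ : M₂.IsSymm := symm_conj M₁ P₂ hsymm₁
  have heven₂ : ∀ i, 2 ∣ M₂ i i := diag_even_conj M₁ P₂ hsymm₁ heven₁
  have hdet₂ : M₂.det = 2 := by rw [hM₂, det_conj M₁ P₂ hP₂det]; exact hdet₁
  have hM200 : M₂ 0 0 = 0 := by
    rw [hM₂, hP₂, hM1exp, trans_lit]
    simp [Matrix.mul_apply, Fin.sum_univ_three, Matrix.vecHead, Matrix.vecTail]
  have hM201 : M₂ 0 1 = 1 := by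
    rw [hM₂, hP₂, hM1exp, trans_lit]
    simp [Matrix.mul_apply, Fin.sum_univ_three, Matrix.vecHead, Matrix.vecTail]
    linear_combination -hbez
  -- scalarize M₂
  set w₂ := M₂ 0 2 with hw₂
  set D := M₂ 1 1 with hD
  set E := M₂ 1 2 with hE
  set F := M₂ 2 2 with hF
  have hM2exp : M₂ = !![0,1,w₂;1,D,E;w₂,E,F] := by
    conv_lhs => rw [fin3_eta M₂]
    rw [IsSymm.e hsymm₂ 0 1, IsSymm.e hsymm₂ 0 2, IsSymm.e hsymm₂ 1 2, hM200, hM201]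
  set P₃ : Matrix (Fin 3) (Fin 3) ℤ := !![1,0,0;0,1,-w₂;0,0,1] with hP₃
  have hP₃det : P₃.det = 1 := by rw [hP₃, Matrix.det_fin_three]; norm_num [Matrix.vecHead, Matrix.vecTail, Matrix.cons_val_two, Matrix.cons_val_one, Matrix.head_cons, Matrix.tail_cons]
  set M₃ := P₃ᵀ * M₂ * P₃ with hM₃
  have hsymm₃ : M₃.IsSymm := symm_conj M₂ P₃ hsymm₂
  have heven₃ : ∀ i, 2 ∣ M₃ i i := diag_even_conj M₂ P₃ hsymm₂ heven₂
  have hdet₃ : M₃.det = 2 := by rw [hM₃, det_conj M₂ P₃ hP₃det]; exact hdet₂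
  have hM300 : M₃ 0 0 = 0 := by
    rw [hM₃, hP₃, hM2exp, trans_lit]
    simp [Matrix.mul_apply, Fin.sum_univ_three, Matrix.vecHead, Matrix.vecTail]
  have hM301 : M₃ 0 1 = 1 := by
    rw [hM₃, hP₃, hM2exp, trans_lit]
    simp [Matrix.mul_apply, Fin.sum_univ_three, Matrix.vecHead, Matrix.vecTail]
  have hM302 : M₃ 0 2 = 0 := by
    rw [hM₃, hP₃, hM2exp, trans_lit]
    simp [Matrix.mul_apply, Fin.sum_univ_three, Matrix.vecHead, Matrix.vecTail]
  -- scalarize M₃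
  set D₃ := M₃ 1 1 with hD₃
  set E₃ := M₃ 1 2 with hE₃
  set F₃ := M₃ 2 2 with hF₃
  have hM3exp : M₃ = !![0,1,0;1,D₃,E₃;0,E₃,F₃] := by
    conv_lhs => rw [fin3_eta M₃]
    rw [IsSymm.e hsymm₃ 0 1, IsSymm.e hsymm₃ 0 2, IsSymm.e hsymm₃ 1 2, hM300, hM301, hM302]
  set P₄ : Matrix (Fin 3) (Fin 3) ℤ := !![1,0,-E₃;0,1,0;0,0,1] with hP₄
  have hP₄det : P₄.det = 1 := by rw [hP₄, Matrix.det_fin_three]; norm_num [Matrix.vecHead, Matrix.vecTail, Matrix.cons_val_two, Matrix.cons_val_one, Matrix.head_cons, Matrix.tail_cons]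
  set M₄ := P₄ᵀ * M₃ * P₄ with hM₄
  have hsymm₄ : M₄.IsSymm := symm_conj M₃ P₄ hsymm₃
  have heven₄ : ∀ i, 2 ∣ M₄ i i := diag_even_conj M₃ P₄ hsymm₃ heven₃
  have hdet₄ : M₄.det = 2 := by rw [hM₄, det_conj M₃ P₄ hP₄det]; exact hdet₃
  have hM400 : M₄ 0 0 = 0 := by
    rw [hM₄, hP₄, hM3exp, trans_lit]
    simp [Matrix.mul_apply, Fin.sum_univ_three, Matrix.vecHead, Matrix.vecTail]
  have hM401 : M₄ 0 1 = 1 := by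
    rw [hM₄, hP₄, hM3exp, trans_lit]
    simp [Matrix.mul_apply, Fin.sum_univ_three, Matrix.vecHead, Matrix.vecTail]
  have hM402 : M₄ 0 2 = 0 := by
    rw [hM₄, hP₄, hM3exp, trans_lit]
    simp [Matrix.mul_apply, Fin.sum_univ_three, Matrix.vecHead, Matrix.vecTail]
  have hM412 : M₄ 1 2 = 0 := by
    rw [hM₄, hP₄, hM3exp, trans_lit]
    simp [Matrix.mul_apply, Fin.sum_univ_three, Matrix.vecHead, Matrix.vecTail]
  -- scalarize M₄
  set D₄ := M₄ 1 1 with hD₄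
  set F₄ := M₄ 2 2 with hF₄
  have hM4exp : M₄ = !![0,1,0;1,D₄,0;0,0,F₄] := by
    conv_lhs => rw [fin3_eta M₄]
    rw [IsSymm.e hsymm₄ 0 1, IsSymm.e hsymm₄ 0 2, IsSymm.e hsymm₄ 1 2,
      hM400, hM401, hM402, hM412]
  obtain ⟨k, hk⟩ := heven₄ 1
  rw [← hD₄] at hk
  set P₅ : Matrix (Fin 3) (Fin 3) ℤ := !![1,-k,0;0,1,0;0,0,1] with hP₅
  have hP₅det : P₅.det = 1 := by rw [hP₅, Matrix.det_fin_three]; norm_num [Matrix.vecHead, Matrix.vecTail, Matrix.cons_val_two, Matrix.cons_val_one, Matrix.head_cons, Matrix.tail_cons]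
  set M₅ := P₅ᵀ * M₄ * P₅ with hM₅
  have hsymm₅ : M₅.IsSymm := symm_conj M₄ P₅ hsymm₄
  have hdet₅ : M₅.det = 2 := by rw [hM₅, det_conj M₄ P₅ hP₅det]; exact hdet₄
  have hM500 : M₅ 0 0 = 0 := by
    rw [hM₅, hP₅, hM4exp, trans_lit]
    simp [Matrix.mul_apply, Fin.sum_univ_three, Matrix.vecHead, Matrix.vecTail]
  have hM501 : M₅ 0 1 = 1 := by
    rw [hM₅, hP₅, hM4exp, trans_lit]
    simp [Matrix.mul_apply, Fin.sum_univ_three, Matrix.vecHead, Matrix.vecTail]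
  have hM502 : M₅ 0 2 = 0 := by
    rw [hM₅, hP₅, hM4exp, trans_lit]
    simp [Matrix.mul_apply, Fin.sum_univ_three, Matrix.vecHead, Matrix.vecTail]
  have hM511 : M₅ 1 1 = 0 := by
    rw [hM₅, hP₅, hM4exp, trans_lit]
    simp [Matrix.mul_apply, Fin.sum_univ_three, Matrix.vecHead, Matrix.vecTail]
    linear_combination hk
  have hM512 : M₅ 1 2 = 0 := by
    rw [hM₅, hP₅, hM4exp, trans_lit]
    simp [Matrix.mul_apply, Fin.sum_univ_three, Matrix.vecHead, Matrix.vecTail]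
  set F₅ := M₅ 2 2 with hF₅
  have hM5exp : M₅ = !![0,1,0;1,0,0;0,0,F₅] := by
    conv_lhs => rw [fin3_eta M₅]
    rw [IsSymm.e hsymm₅ 0 1, IsSymm.e hsymm₅ 0 2, IsSymm.e hsymm₅ 1 2,
      hM500, hM501, hM502, hM511, hM512]
  have hF₅val : F₅ = -2 := by
    have hdet' := hdet₅
    rw [hM5exp, Matrix.det_fin_three] at hdet'
    norm_num [Matrix.cons_val_two, Matrix.cons_val_one, Matrix.head_cons, Matrix.tail_cons] at hdet'
    linarith [hdet']
  have htarget : M₅ = targetGram := by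
    rw [hM5exp, hF₅val]
    rfl
  refine ⟨P₀ * P₂ * P₃ * P₄ * P₅, ?_, ?_⟩
  · simp only [Matrix.det_mul, hP₀det, hP₂det, hP₃det, hP₄det, hP₅det]
    norm_num
  · rw [← htarget, hM₅, hM₄, hM₃, hM₂, hM₁]
    simp only [Matrix.transpose_mul, Matrix.mul_assoc]
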